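/- arXiv:1505.04503 — 4 statements merged into one kernel-verified Lean document; each statement's English description precedes it below -/
import Mathlib

section
/- Let L be a Lie ideal of a C*-algebra A. Then A[L,L]A ⊆ L + L², i.e., the linear span of {a[l₁,l₂]b : a,b ∈ A, l₁,l₂ ∈ L} is contained in the linear span of L together with products of two elements of L. -/
/-!
With `M = L + L²`, two commutator identities do the work. First,
`[l, m] c = [l, m c] - m [l, c]` puts `[L, L] A` inside `M`. Second, `M` is again a Lie ideal,
since `[l m, a] = l [m, a] + [l, a] m`. Then
`a [l, m] b = [a, [l, m] b] + [l, m] (b a)` lies in `M`.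
-/

/-- The linear span of commutators `[X,Y]` of elements of two subsets of a C*-algebra. -/
def commSpan {A : Type*} [NonUnitalCStarAlgebra A] (X Y : Set A) : Submodule ℂ A :=
  Submodule.span ℂ {z | ∃ x ∈ X, ∃ y ∈ Y, z = x * y - y * x}

/-- The linear span of products `XY` of elements of two subsets of a C*-algebra. -/
def prodSpan {A : Type*} [NonUnitalCStarAlgebra A] (X Y : Set A) : Submodule ℂ A :=
  Submodule.span ℂ {z | ∃ x ∈ X, ∃ y ∈ Y, z = x * y}

/-- A Lie ideal of `A` is a linear subspace `L` with `[L,A] ⊆ L`. -/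
def IsLieIdeal {A : Type*} [NonUnitalCStarAlgebra A] (L : Submodule ℂ A) : Prop :=
  commSpan (L : Set A) Set.univ ≤ L

namespace Submodule

open Pointwise

variable {R A : Type*} [Ring R] [NonUnitalRing A] [Module R A] {L : Submodule R A}

theorem commutator_mul_mem_sup_span_mul_self (hL : ∀ l ∈ L, ∀ a : A, l * a - a * l ∈ L)
    {l m : A} (hl : l ∈ L) (hm : m ∈ L) (c : A) :
    (l * m - m * l) * c ∈ L ⊔ span R ((L : Set A) * (L : Set A)) := by
  have hsplit : (l * m - m * l) * c = (l * (m * c) - m * c * l) - m * (l * c - c * l) := by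
    noncomm_ring
  rw [hsplit]
  exact sub_mem (mem_sup_left (hL l hl _))
    (mem_sup_right (subset_span (Set.mul_mem_mul hm (hL l hl c))))

variable [SMulCommClass R A A] [IsScalarTower R A A]

theorem mul_sub_mul_mem_span_mul_self (hL : ∀ l ∈ L, ∀ a : A, l * a - a * l ∈ L)
    {z : A} (hz : z ∈ span R ((L : Set A) * (L : Set A))) (a : A) :
    z * a - a * z ∈ span R ((L : Set A) * (L : Set A)) := by
  let ad : A →ₗ[R] A := LinearMap.mulRight R a - LinearMap.mulLeft R a
  suffices span R ((L : Set A) * (L : Set A)) ≤ (span R ((L : Set A) * (L : Set A))).comap ad from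
    this hz
  rw [span_le]
  rintro _ ⟨l, hl, m, hm, rfl⟩
  have hsplit : l * m * a - a * (l * m) = l * (m * a - a * m) + (l * a - a * l) * m := by
    noncomm_ring
  change l * m * a - a * (l * m) ∈ span R ((L : Set A) * (L : Set A))
  rw [hsplit]
  exact add_mem (subset_span (Set.mul_mem_mul hl (hL m hm a)))
    (subset_span (Set.mul_mem_mul (hL l hl a) hm))

theorem mul_sub_mul_mem_sup_span_mul_self (hL : ∀ l ∈ L, ∀ a : A, l * a - a * l ∈ L)
    {z : A} (hz : z ∈ L ⊔ span R ((L : Set A) * (L : Set A))) (a : A) :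
    z * a - a * z ∈ L ⊔ span R ((L : Set A) * (L : Set A)) := by
  obtain ⟨x, hx, y, hy, rfl⟩ := mem_sup.mp hz
  have hsplit : (x + y) * a - a * (x + y) = (x * a - a * x) + (y * a - a * y) := by
    noncomm_ring
  rw [hsplit]
  exact add_mem (mem_sup_left (hL x hx a)) (mem_sup_right (mul_sub_mul_mem_span_mul_self hL hy a))

theorem mul_commutator_mul_mem_sup_span_mul_self (hL : ∀ l ∈ L, ∀ a : A, l * a - a * l ∈ L)
    {l m : A} (hl : l ∈ L) (hm : m ∈ L) (a b : A) :
    a * (l * m - m * l) * b ∈ L ⊔ span R ((L : Set A) * (L : Set A)) := by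
  have hsplit : a * (l * m - m * l) * b =
      (l * m - m * l) * (b * a) - ((l * m - m * l) * b * a - a * ((l * m - m * l) * b)) := by
    noncomm_ring
  rw [hsplit]
  exact sub_mem (commutator_mul_mem_sup_span_mul_self hL hl hm _)
    (mul_sub_mul_mem_sup_span_mul_self hL (commutator_mul_mem_sup_span_mul_self hL hl hm b) a)

end Submodule

open Pointwise in
theorem prodSpan_eq_span_mul {A : Type*} [NonUnitalCStarAlgebra A] (X Y : Set A) :
    prodSpan X Y = Submodule.span ℂ (X * Y) := by
  rw [prodSpan]
  congr 1
  ext z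
  simp only [Set.mem_ofPred_eq, Set.mem_mul, eq_comm]

theorem IsLieIdeal.mul_sub_mul_mem {A : Type*} [NonUnitalCStarAlgebra A] {L : Submodule ℂ A}
    (hL : IsLieIdeal L) {l : A} (hl : l ∈ L) (a : A) : l * a - a * l ∈ L :=
  hL (Submodule.subset_span ⟨l, hl, a, Set.mem_univ a, rfl⟩)

/-- if `L` is a Lie ideal of a C*-algebra `A`, then `A[L,L]A ⊆ L + L²`. -/
theorem lie_ideal_ALLA_subset (A : Type*) [NonUnitalCStarAlgebra A]
    (L : Submodule ℂ A) (hL : IsLieIdeal L) :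
    Submodule.span ℂ {z : A | ∃ a b : A, ∃ l₁ ∈ L, ∃ l₂ ∈ L,
        z = a * (l₁ * l₂ - l₂ * l₁) * b}
      ≤ L ⊔ prodSpan (L : Set A) (L : Set A) := by
  rw [prodSpan_eq_span_mul, Submodule.span_le]
  rintro _ ⟨a, b, l₁, hl₁, l₂, hl₂, rfl⟩
  exact Submodule.mul_commutator_mul_mem_sup_span_mul_self (fun _ hl ↦ hL.mul_sub_mul_mem hl)
    hl₁ hl₂ a b
end

section
/- Let A be a C*-algebra and let k ≥ 2. Every element x ∈ A with xᵏ = 0 is a sum of k−1 commutators, i.e., x = Σ_{i=1}^{k−1} [aᵢ, bᵢ] for some aᵢ, bᵢ ∈ A. -/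
/-!
Put `h = x⋆x` and `q = h^{1/4}`. As `r → 0` the elements `x f_r(h)`, with
`f_r(t) = t^{3/4} / (t + r⁴)`, form a Cauchy family: since `‖x g(h)‖² = ‖g(h)² h‖`,
the distance between two of them is at most `sup_t |f_r(t) - f_s(t)| t^{1/2} ≤ r + s`.
Their limit `u` satisfies `u q = x`, every left annihilator of `x` kills `u`, and every right
annihilator of `x` kills `h`, hence its square roots, hence `q`. So `x = [u, q] + q u`, and if
`x^n = 0` then `q x^{n-1} = 0`, whence `(q u)^{n-1} = q x^{n-2} u = 0`; induction on `n`
finishes.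
-/

/-- `nupow x n = x^(n+1)`: powers with positive exponent in a possibly non-unital algebra. -/
def nupow {A : Type*} [Mul A] (x : A) : ℕ → A
  | 0 => x
  | n + 1 => nupow x n * x

section Semigroup

variable {A : Type*}

lemma nupow_succ' [Semigroup A] (x : A) (n : ℕ) : nupow x (n + 1) = x * nupow x n := by
  induction n with
  | zero => rfl
  | succ n ih =>
    show nupow x (n + 1) * x = x * (nupow x n * x)
    rw [ih, mul_assoc]

lemma nupow_mul_comm [Semigroup A] (u q : A) (n : ℕ) :
    nupow (q * u) (n + 1) = q * nupow (u * q) n * u := by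
  induction n with
  | zero => simp only [nupow, mul_assoc]
  | succ n ih => rw [nupow, ih, nupow]; simp only [mul_assoc]

lemma nupow_mul_comm_eq_zero [SemigroupWithZero A] {u q : A} {n : ℕ}
    (hu : ∀ c, c * (u * q) = 0 → c * u = 0) (hq : ∀ w, u * q * w = 0 → q * w = 0)
    (h : nupow (u * q) (n + 1) = 0) : nupow (q * u) n = 0 := by
  have hqx : q * nupow (u * q) n = 0 := hq _ (by rwa [← nupow_succ'])
  cases n with
  | zero => exact hu q hqx
  | succ m =>
    rw [nupow_mul_comm]
    exact hu _ (by rw [mul_assoc]; exact hqx)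

end Semigroup

open Filter Topology

lemma cauchySeq_of_dist_le_add {α β : Type*} [PseudoMetricSpace α] [Nonempty β]
    [SemilatticeSup β] {u : β → α} {r : β → ℝ} (hr : Tendsto r atTop (𝓝 0))
    (hu : ∀ m n, dist (u m) (u n) ≤ r m + r n) : CauchySeq u := by
  refine Metric.cauchySeq_iff'.2 fun ε hε => ?_
  obtain ⟨N, hN⟩ := eventually_atTop.1 (hr.eventually (gt_mem_nhds (half_pos hε)))
  exact ⟨N, fun n hn => (hu n N).trans_lt (by linarith [hN n hn, hN N le_rfl])⟩

lemma mul_pow_four_div_le {s r : ℝ} (hs : 0 ≤ s) (hr : 0 < r) :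
    s * r ^ 4 / (s ^ 4 + r ^ 4) ≤ r := by
  rw [div_le_iff₀ (by positivity)]
  have amgm : s * r ^ 3 ≤ s ^ 4 + r ^ 4 := by
    rcases le_total s r with h | h
    · nlinarith [pow_le_pow_left₀ hs h 3, pow_nonneg hs 4, pow_nonneg hr.le 3]
    · nlinarith [pow_le_pow_left₀ hr.le h 3, pow_nonneg hr.le 4, pow_nonneg hs 3]
  nlinarith


/-- For `t ≥ 0` this is `t ^ (3/4) / (t + r ^ 4)`, an approximation of `t ^ (-1/4)`. -/
noncomputable def invQuarticRootApprox (r t : ℝ) : ℝ := √√t ^ 3 / (√√t ^ 4 + r ^ 4)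

lemma continuous_invQuarticRootApprox {r : ℝ} (hr : 0 < r) :
    Continuous (invQuarticRootApprox r) :=
  Continuous.div (by fun_prop) (by fun_prop) fun t => by positivity

lemma invQuarticRootApprox_zero (r : ℝ) : invQuarticRootApprox r 0 = 0 := by
  simp [invQuarticRootApprox]

lemma abs_invQuarticRootApprox_sub_mul_sqrt_le (t : ℝ) {r₁ r₂ : ℝ} (hr₁ : 0 < r₁)
    (hr₂ : 0 < r₂) :
    |invQuarticRootApprox r₁ t - invQuarticRootApprox r₂ t| * √t ≤ r₁ + r₂ := by
  rw [invQuarticRootApprox, invQuarticRootApprox]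
  set s := √√t
  rw [show √t = s ^ 2 from (Real.sq_sqrt (Real.sqrt_nonneg t)).symm]
  have hs : 0 ≤ s := Real.sqrt_nonneg _
  have key (r : ℝ) (hr : 0 < r) :
      s ^ 3 / (s ^ 4 + r ^ 4) * s ^ 2 = s - s * r ^ 4 / (s ^ 4 + r ^ 4) := by
    field_simp; ring
  have h₁ := mul_pow_four_div_le hs hr₁
  have h₂ := mul_pow_four_div_le hs hr₂
  have h₁' : 0 ≤ s * r₁ ^ 4 / (s ^ 4 + r₁ ^ 4) := by positivity
  have h₂' : 0 ≤ s * r₂ ^ 4 / (s ^ 4 + r₂ ^ 4) := by positivity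
  rw [← abs_of_nonneg (sq_nonneg s), ← abs_mul, sub_mul, key r₁ hr₁, key r₂ hr₂, abs_le]
  constructor <;> linarith

lemma abs_invQuarticRootApprox_mul_sub_one_mul_sqrt_le (t : ℝ) {r : ℝ} (hr : 0 < r) :
    |invQuarticRootApprox r t * √√t - 1| * √t ≤ r ^ 2 := by
  rw [invQuarticRootApprox]
  set s := √√t
  rw [show √t = s ^ 2 from (Real.sq_sqrt (Real.sqrt_nonneg t)).symm]
  have hd : 0 < s ^ 4 + r ^ 4 := by positivity
  have key : s ^ 3 / (s ^ 4 + r ^ 4) * s - 1 = -(r ^ 4 / (s ^ 4 + r ^ 4)) := by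
    field_simp; ring
  rw [key, abs_neg, abs_of_nonneg (by positivity), div_mul_eq_mul_div, div_le_iff₀ hd]
  nlinarith [sq_nonneg (s ^ 2 - r ^ 2), pow_pos hr 2]

section CStarAlgebra

variable {A : Type*} [NonUnitalCStarAlgebra A]

lemma quasispectrum_star_mul_self_nonneg (x : A) :
    ∀ t ∈ quasispectrum ℝ (star x * x), 0 ≤ t := by
  let _ := CStarAlgebra.spectralOrder A
  have := CStarAlgebra.spectralOrderedRing A
  exact quasispectrum_nonneg_of_nonneg _ (star_mul_self_nonneg x)

lemma IsSelfAdjoint.mul_eq_zero_of_mul_mul_eq_zero {a w : A} (ha : IsSelfAdjoint a)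
    (h : a * (a * w) = 0) : a * w = 0 := by
  rw [← CStarRing.star_mul_self_eq_zero_iff, star_mul, ha.star_eq, mul_assoc, h, mul_zero]

lemma cfcₙ_sqrt_sqrt_mul_eq_zero {x w : A} (hxw : x * w = 0) :
    cfcₙ (fun t : ℝ => √√t) (star x * x) * w = 0 := by
  set h := star x * x
  set r := cfcₙ (fun t : ℝ => √t) h
  have hrr : r * r = h := by
    rw [← cfcₙ_mul _ _ h, cfcₙ_congr (g := fun t => t), cfcₙ_id' ℝ h]
    exact fun t ht => Real.mul_self_sqrt (quasispectrum_star_mul_self_nonneg x t ht)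
  have hqq : cfcₙ (fun t : ℝ => √√t) h * cfcₙ (fun t : ℝ => √√t) h = r := by
    rw [← cfcₙ_mul _ _ h]
    exact cfcₙ_congr fun t _ => Real.mul_self_sqrt (Real.sqrt_nonneg t)
  have hrw : r * w = 0 := by
    refine IsSelfAdjoint.mul_eq_zero_of_mul_mul_eq_zero (cfcₙ_predicate _ h) ?_
    rw [← mul_assoc, hrr, mul_assoc, hxw, mul_zero]
  refine IsSelfAdjoint.mul_eq_zero_of_mul_mul_eq_zero (cfcₙ_predicate _ h) ?_
  rw [← mul_assoc, hqq, hrw]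

lemma norm_mul_cfcₙ_sub_smul_sq (x : A) {F : ℝ → ℝ} (a : ℝ) (hF : Continuous F)
    (hF0 : F 0 = 0) :
    ‖x * cfcₙ F (star x * x) - a • x‖ ^ 2 =
      ‖cfcₙ (fun t => (F t - a) ^ 2 * t) (star x * x)‖ := by
  set h := star x * x
  set c := cfcₙ F h
  have hc : IsSelfAdjoint c := cfcₙ_predicate F h
  have expand : star (x * c - a • x) * (x * c - a • x) =
      c * h * c - a • (c * h) - a • (h * c) + a ^ 2 • h := by
    simp only [star_sub, star_mul, hc.star_eq, star_smul, star_trivial, h]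
    simp only [mul_sub, sub_mul, smul_mul_assoc, mul_smul_comm, smul_sub, smul_smul, mul_assoc]
    module
  have hfun : (fun t => (F t - a) ^ 2 * t) =
      fun t => F t * t * F t - a * (F t * t) - a * (t * F t) + a ^ 2 * t := by
    funext t; ring
  rw [sq, ← CStarRing.norm_star_mul_self, expand, hfun, cfcₙ_add _ _ h, cfcₙ_sub _ _ h,
    cfcₙ_sub _ _ h, cfcₙ_const_mul _ _ h, cfcₙ_const_mul _ _ h, cfcₙ_const_mul _ _ h,
    cfcₙ_mul _ _ h, cfcₙ_mul _ _ h, cfcₙ_mul _ _ h, cfcₙ_id' ℝ h]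

lemma norm_mul_cfcₙ_sub_smul_le (x : A) {F : ℝ → ℝ} (a : ℝ) {C : ℝ} (hF : Continuous F)
    (hF0 : F 0 = 0) (hC : ∀ t ∈ quasispectrum ℝ (star x * x), |F t - a| * √t ≤ C) :
    ‖x * cfcₙ F (star x * x) - a • x‖ ≤ C := by
  have hC0 : 0 ≤ C := by simpa using hC 0 (quasispectrum.zero_mem ℝ _)
  rw [← pow_le_pow_iff_left₀ (norm_nonneg _) hC0 two_ne_zero,
    norm_mul_cfcₙ_sub_smul_sq x a hF hF0]
  refine norm_cfcₙ_le fun t ht => ?_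
  have ht0 := quasispectrum_star_mul_self_nonneg x t ht
  have hsq : (F t - a) ^ 2 * t = (|F t - a| * √t) ^ 2 := by
    rw [mul_pow, sq_abs, Real.sq_sqrt ht0]
  rw [hsq, Real.norm_eq_abs, abs_of_nonneg (sq_nonneg _)]
  exact pow_le_pow_left₀ (by positivity) (hC t ht) 2

theorem exists_mul_eq_and_annihilators_le (x : A) :
    ∃ u q : A, u * q = x ∧ (∀ c, c * x = 0 → c * u = 0) ∧
      (∀ w, x * w = 0 → q * w = 0) := by
  set h := star x * x
  set r : ℕ → ℝ := fun n => 1 / (n + 1)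
  have hr (n : ℕ) : 0 < r n := by positivity
  have hr_lim : Tendsto r atTop (𝓝 0) := tendsto_one_div_add_atTop_nhds_zero_nat
  have hf (n : ℕ) := continuous_invQuarticRootApprox (hr n)
  set s : ℕ → A := fun n => x * cfcₙ (invQuarticRootApprox (r n)) h
  have hs : CauchySeq s := by
    refine cauchySeq_of_dist_le_add hr_lim fun m n => ?_
    have := norm_mul_cfcₙ_sub_smul_le x 0
      (F := fun t => invQuarticRootApprox (r m) t - invQuarticRootApprox (r n) t)
      ((hf m).sub (hf n)) (by simp [invQuarticRootApprox_zero])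
      fun t _ => by simpa using abs_invQuarticRootApprox_sub_mul_sqrt_le t (hr m) (hr n)
    rwa [zero_smul, sub_zero, cfcₙ_sub _ _ h (hf m).continuousOn
      (invQuarticRootApprox_zero _) (hf n).continuousOn (invQuarticRootApprox_zero _), mul_sub,
      ← dist_eq_norm] at this
  obtain ⟨u, hu⟩ := cauchySeq_tendsto_of_complete hs
  set q := cfcₙ (fun t : ℝ => √√t) h
  refine ⟨u, q, ?_, fun c hc => ?_, fun w hw => cfcₙ_sqrt_sqrt_mul_eq_zero hw⟩
  · have hsq (n : ℕ) :
        s n * q = x * cfcₙ (fun t => invQuarticRootApprox (r n) t * √√t) h := by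
      rw [cfcₙ_mul _ _ h (hf n).continuousOn (invQuarticRootApprox_zero _), mul_assoc]
    have hbound (n : ℕ) : ‖s n * q - x‖ ≤ r n ^ 2 := by
      simpa [hsq] using norm_mul_cfcₙ_sub_smul_le x 1
        (F := fun t => invQuarticRootApprox (r n) t * √√t) ((hf n).mul (by fun_prop))
        (by simp [invQuarticRootApprox_zero])
        fun t _ => abs_invQuarticRootApprox_mul_sub_one_mul_sqrt_le t (hr n)
    refine tendsto_nhds_unique (hu.mul_const q) (tendsto_iff_norm_sub_tendsto_zero.2 ?_)
    exact squeeze_zero (fun n => norm_nonneg _) hbound (by simpa using hr_lim.pow 2)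
  · refine tendsto_nhds_unique (hu.const_mul c) ?_
    simp only [s, ← mul_assoc, hc, zero_mul, tendsto_const_nhds]

theorem exists_sum_commutators_of_nupow_eq_zero (n : ℕ) (x : A) (hx : nupow x n = 0) :
    ∃ a b : Fin n → A, x = ∑ i, (a i * b i - b i * a i) := by
  induction n generalizing x with
  | zero => exact ⟨0, 0, by simpa [nupow] using hx⟩
  | succ n ih =>
    obtain ⟨u, q, rfl, hu, hq⟩ := exists_mul_eq_and_annihilators_le x
    obtain ⟨a, b, hab⟩ := ih (q * u) (nupow_mul_comm_eq_zero hu hq hx)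
    refine ⟨Fin.cons u a, Fin.cons q b, ?_⟩
    rw [Fin.sum_univ_succ, Fin.cons_zero, Fin.cons_zero]
    simp only [Fin.cons_succ, ← hab, sub_add_cancel]

end CStarAlgebra

theorem nilpotent_sum_commutators_general (A : Type*) [NonUnitalCStarAlgebra A]
    (k : ℕ) (x : A) (hx : nupow x (k - 1) = 0) :
    ∃ a b : Fin (k - 1) → A, x = ∑ i, (a i * b i - b i * a i) :=
  exists_sum_commutators_of_nupow_eq_zero (k - 1) x hx

/-- in a C*-algebra, every element `x` with `x^k = 0` (`k ≥ 2`) is a sum of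
`k - 1` commutators. -/
theorem nilpotent_sum_commutators (A : Type*) [NonUnitalCStarAlgebra A]
    (k : ℕ) (hk : 2 ≤ k) (x : A) (hx : nupow x (k - 1) = 0) :
    ∃ a b : Fin (k - 1) → A, x = ∑ i, (a i * b i - b i * a i) :=
  nilpotent_sum_commutators_general A k x hx
end

section
/- Let A be a unital C*-algebra and N ∈ ℕ, and suppose there exist x₁,…,x_N ∈ A with xᵢ² = 0 and d₁,…,d_N ∈ A such that 1 = Σ_{i=1}^N dᵢ* xᵢ* xᵢ dᵢ (A is weakly (2,N)-divisible). Then every element a ∈ A can be written as a = Σ_{i=1}^N [aᵢ,bᵢ] + Σ_{i=1}^N [cᵢ,dᵢ]·[cᵢ',dᵢ'] for suitable elements aᵢ,bᵢ,cᵢ,dᵢ,cᵢ',dᵢ' ∈ A. -/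
/-!
For `x² = 0` put `h = x*x`, `P = 1 - (1 - h/‖h‖)ⁿ` and `Q = 1 - (1 - xx*/‖h‖)ⁿ`. These satisfy
`P x = 0`, `Q x = x P` and `Q P = 0`, and for such `P, Q` every element `b x P⁴ d` is one commutator
plus one product of two commutators. By the spectral theorem `‖h - h P⁴‖ ≤ 4‖h‖/(n+1)`, so for
large `n` the element `∑ dᵢ* xᵢ* xᵢ Pᵢ⁴ dᵢ` is within distance `< 1` of `∑ dᵢ* xᵢ* xᵢ dᵢ = 1`,
hence invertible, and any `a` equals `∑ s dᵢ* xᵢ* xᵢ Pᵢ⁴ dᵢ` for a suitable `s`.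
-/

open Filter Topology

def supportApprox {R : Type*} [Ring R] (a : R) (n : ℕ) : R := 1 - (1 - a) ^ n

section Ring

variable {R : Type*} [Ring R] {x y : R}

theorem supportApprox_mul_mul_eq_zero (hx : x * x = 0) (n : ℕ) :
    supportApprox (y * x) n * x = 0 := by
  rw [supportApprox, ← geom_sum_mul_neg, sub_sub_cancel, mul_assoc, mul_assoc, hx, mul_zero,
    mul_zero]

theorem supportApprox_mul_mul_eq_mul_supportApprox_mul (n : ℕ) :
    supportApprox (x * y) n * x = x * supportApprox (y * x) n := by
  have hsemiconj : SemiconjBy x (1 - y * x) (1 - x * y) := by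
    simp only [SemiconjBy, mul_sub, sub_mul, mul_one, one_mul, mul_assoc]
  rw [supportApprox, supportApprox, sub_mul, mul_sub, (hsemiconj.pow_right n).eq, one_mul,
    mul_one]

theorem supportApprox_mul_mul_supportApprox_mul_eq_zero (hy : y * y = 0) (m n : ℕ) :
    supportApprox (x * y) m * supportApprox (y * x) n = 0 := by
  rw [supportApprox, supportApprox, ← geom_sum_mul_neg, ← mul_neg_geom_sum, sub_sub_cancel,
    sub_sub_cancel]
  simp only [mul_assoc, ← mul_assoc y y, hy, zero_mul, mul_zero]

theorem commutator_add_commutator_mul_commutator_eq {P Q b d : R} (hPx : P * x = 0)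
    (hQx : Q * x = x * P) (hQP : Q * P = 0) :
    (b * Q) * (Q ^ 3 * x * d) - (Q ^ 3 * x * d) * (b * Q) +
        (x * P * P - P * (x * P)) * (P * (d * b * Q) - d * b * Q * P) =
      b * x * P ^ 4 * d := by
  have hpow (k : ℕ) : Q ^ k * x = x * P ^ k := ((SemiconjBy.pow_right hQx.symm k).eq).symm
  calc (b * Q) * (Q ^ 3 * x * d) - (Q ^ 3 * x * d) * (b * Q) +
          (x * P * P - P * (x * P)) * (P * (d * b * Q) - d * b * Q * P)
      = b * (Q ^ 4 * x) * d - (Q ^ 3 * x) * d * b * Q +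
          (x * P * P - (P * x) * P) * (P * (d * b * Q) - d * b * (Q * P)) := by
        simp only [pow_succ, pow_zero, one_mul, mul_assoc]
    _ = b * x * P ^ 4 * d := by
        rw [hpow, hpow, hPx, hQP]
        simp only [pow_succ, pow_zero, one_mul, mul_assoc, zero_mul, mul_zero, sub_zero]
        abel

end Ring

open Finset in
theorem mul_mul_one_sub_pow_le_one {s : ℝ} (hs₀ : 0 ≤ s) (hs₁ : s ≤ 1) (n : ℕ) :
    (n + 1) * (s * (1 - s) ^ n) ≤ 1 := by
  have hterm := single_le_sum (f := fun m => s ^ m * (1 - s) ^ (n + 1 - m) * (n + 1).choose m)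
    (fun m _ => by have := sub_nonneg.2 hs₁; positivity) (mem_range.2 (by omega : 1 < n + 2))
  rw [← add_pow, add_sub_cancel, one_pow] at hterm
  simp only [pow_one, Nat.add_sub_cancel, Nat.choose_one_right] at hterm
  push_cast at hterm
  linarith

theorem abs_sub_mul_one_sub_one_sub_pow_pow_four_le {M t : ℝ} (ht₀ : 0 ≤ t) (htM : t ≤ M)
    (n : ℕ) : |t - t * (1 - (1 - M⁻¹ * t) ^ n) ^ 4| ≤ 4 * M / (n + 1) := by
  obtain rfl | hM := (ht₀.trans htM).eq_or_lt
  · simp [le_antisymm htM ht₀]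
  set s := M⁻¹ * t with hs
  have hs₀ : 0 ≤ s := by positivity
  have hs₁ : s ≤ 1 := by rw [hs, inv_mul_le_one₀ hM]; exact htM
  have ht : t = M * s := by rw [hs, mul_inv_cancel_left₀ hM.ne']
  set q := (1 - s) ^ n
  have hq₀ : 0 ≤ q := pow_nonneg (sub_nonneg.2 hs₁) n
  have hq₁ : q ≤ 1 := pow_le_one₀ (sub_nonneg.2 hs₁) (by linarith)
  have hbernoulli : 1 - 4 * q ≤ (1 - q) ^ 4 := by
    simpa [sub_eq_add_neg] using one_add_mul_le_pow (a := -q) (by linarith) 4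
  have hle : (1 - q) ^ 4 ≤ 1 := pow_le_one₀ (by linarith) (by linarith)
  have htq : (n + 1) * (t * q) ≤ M := by
    have := mul_le_mul_of_nonneg_left (mul_mul_one_sub_pow_le_one hs₀ hs₁ n) hM.le
    rw [ht]; linarith
  have hdiff : t - t * (1 - q) ^ 4 ≤ 4 * (t * q) := by nlinarith
  rw [abs_of_nonneg (by nlinarith), le_div_iff₀ (by positivity)]
  nlinarith

section CStarAlgebra

variable {A : Type*} [CStarAlgebra A] [PartialOrder A] [StarOrderedRing A]

theorem norm_sub_mul_supportApprox_pow_four_le {h : A} (hh : 0 ≤ h) (n : ℕ) :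
    ‖h - h * supportApprox (‖h‖⁻¹ • h) n ^ 4‖ ≤ 4 * ‖h‖ / (n + 1) := by
  nontriviality A
  have hcfc : h - h * supportApprox (‖h‖⁻¹ • h) n ^ 4 =
      cfc (fun t : ℝ => t - t * (1 - (1 - ‖h‖⁻¹ * t) ^ n) ^ 4) h := by
    rw [supportApprox, cfc_sub _ _, cfc_mul _ _, cfc_pow _ _ _, cfc_sub _ _, cfc_pow _ _ _,
      cfc_sub _ _, cfc_const_mul _ _, cfc_id' ℝ h, cfc_const_one ℝ h]
  rw [hcfc]
  refine norm_cfc_le (by positivity) fun t ht => ?_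
  rw [Real.norm_eq_abs]
  exact abs_sub_mul_one_sub_one_sub_pow_pow_four_le (spectrum_nonneg_of_nonneg hh ht)
    ((le_abs_self t).trans (spectrum.norm_le_norm_of_mem ht)) n

theorem tendsto_sub_mul_supportApprox_pow_four {h : A} (hh : 0 ≤ h) :
    Tendsto (fun n : ℕ => h - h * supportApprox (‖h‖⁻¹ • h) n ^ 4) atTop (𝓝 0) := by
  refine squeeze_zero_norm (norm_sub_mul_supportApprox_pow_four_le hh) ?_
  have := tendsto_one_div_add_atTop_nhds_zero_nat.const_mul (4 * ‖h‖)
  rw [mul_zero] at this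
  exact this.congr fun n => by ring

theorem tendsto_sum_star_mul_sub_mul_supportApprox_pow_four_mul {ι : Type*} [Fintype ι]
    {h : ι → A} (hh : ∀ i, 0 ≤ h i) (d : ι → A) :
    Tendsto (fun n : ℕ => ∑ i, star (d i) * (h i - h i * supportApprox (‖h i‖⁻¹ • h i) n ^ 4) *
      d i) atTop (𝓝 0) := by
  simpa using tendsto_finsetSum Finset.univ fun i _ =>
    ((tendsto_sub_mul_supportApprox_pow_four (hh i)).const_mul (star (d i))).mul_const (d i)

end CStarAlgebra

/-- if a unital C*-algebra `A` is weakly `(2,N)`-divisible, i.e.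
`1 = ∑_{i=1}^N dᵢ* xᵢ* xᵢ dᵢ` with `xᵢ² = 0`, then every element of `A` is a sum of `N`
commutators plus a sum of `N` products of two commutators. -/
theorem weakly_divisible_sum_commutators (A : Type*) [CStarAlgebra A] (N : ℕ)
    (x d : Fin N → A) (hx : ∀ i, x i * x i = 0)
    (hdiv : (1 : A) = ∑ i, star (d i) * star (x i) * x i * d i) :
    ∀ a : A, ∃ (f g c e c' e' : Fin N → A),
      a = ∑ i, (f i * g i - g i * f i) +
        ∑ i, (c i * e i - e i * c i) * (c' i * e' i - e' i * c' i) := by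
  intro a
  let _ := CStarAlgebra.spectralOrder A
  let _ := CStarAlgebra.spectralOrderedRing A
  set y : Fin N → A := fun i => ‖star (x i) * x i‖⁻¹ • star (x i)
  have hy (i : Fin N) : y i * y i = 0 := by
    simp only [y, smul_mul_smul, ← star_mul, hx, star_zero, smul_zero]
  set P : ℕ → Fin N → A := fun n i => supportApprox (y i * x i) n
  set Q : ℕ → Fin N → A := fun n i => supportApprox (x i * y i) n
  set r : ℕ → A := fun n =>
    ∑ i, star (d i) * (star (x i) * x i - star (x i) * x i * P n i ^ 4) * d i
  have hr : Tendsto r atTop (𝓝 0) := by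
    simpa only [r, P, y, smul_mul_assoc] using
      tendsto_sum_star_mul_sub_mul_supportApprox_pow_four_mul
        (fun i => star_mul_self_nonneg (x i)) d
  obtain ⟨n, hn⟩ := (hr.eventually (Metric.ball_mem_nhds 0 one_pos)).exists
  obtain ⟨v, hv⟩ := (isUnit_one_sub_of_norm_lt_one (mem_ball_zero_iff.mp hn)).exists_left_inv
  set s := a * v
  have hrn : 1 - r n = ∑ i, star (d i) * star (x i) * x i * P n i ^ 4 * d i := by
    rw [hdiv, ← Finset.sum_sub_distrib]
    exact Finset.sum_congr rfl fun i _ => by noncomm_ring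
  have ha : a = ∑ i, s * star (d i) * star (x i) * x i * P n i ^ 4 * d i := by
    calc a = a * (v * (1 - r n)) := by rw [hv, mul_one]
      _ = _ := by
        rw [hrn, ← mul_assoc, Finset.mul_sum]
        simp only [s, mul_assoc]
  refine ⟨fun i => s * star (d i) * star (x i) * Q n i, fun i => Q n i ^ 3 * x i * d i,
    fun i => x i * P n i, P n, P n, fun i => d i * (s * star (d i) * star (x i)) * Q n i, ?_⟩
  rw [← Finset.sum_add_distrib, ha]
  exact Finset.sum_congr rfl fun i _ =>
    (commutator_add_commutator_mul_commutator_eq (supportApprox_mul_mul_eq_zero (hx i) n)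
      (supportApprox_mul_mul_eq_mul_supportApprox_mul n)
      (supportApprox_mul_mul_supportApprox_mul_eq_zero (hy i) n n)).symm
end

section
/- Every idempotent e (e² = e) in a unital C*-algebra A is a linear combination of four projections, i.e., there exist projections p₁, p₂, p₃, p₄ ∈ A (pᵢ = pᵢ* = pᵢ²) and scalars λ₁, λ₂, λ₃, λ₄ ∈ ℂ with e = λ₁p₁ + λ₂p₂ + λ₃p₃ + λ₄p₄. -/
/-!
Let `p = e e* (1 + (e - e*)* (e - e*))⁻¹` be the range projection of `e`: it is a projection with
`p e = e` and `e p = p`, so `ν = e - p` satisfies `p ν = ν` and `ν p = 0`. After scaling so that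
`‖ν‖ ≤ 1`, put `c = (1 - ν ν*)^(1/2)`. For `|ω| = 1`,
`q_ω = ½ (p (1 + c) + ω ν + ω̄ ν* + ν* (1 + c)⁻¹ ν)` is a projection: relative to `p` it is the
`2 × 2` block projection with off-diagonal corner `ω ν / 2`. Only the corner depends on `ω`, so
`ν` is a linear combination of `q_1`, `q_{-1}` and `q_i`, and `e = p + ν` of four projections.
-/

open scoped Ring

theorem Commute.ringInverse_left {M₀ : Type*} [MonoidWithZero M₀] {a b : M₀} (h : Commute a b) :
    Commute a⁻¹ʳ b := by
  by_cases ha : IsUnit a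
  · obtain ⟨u, rfl⟩ := ha
    rw [Ring.inverse_unit]
    exact h.units_inv_left
  · rw [Ring.inverse_non_unit _ ha]
    exact Commute.zero_left b

theorem IsSelfAdjoint.star_mul_eq_of_mul_eq {R : Type*} [Mul R] [StarMul R] {p ν : R}
    (hp : IsSelfAdjoint p) (hpν : p * ν = ν) : star ν * p = star ν := by
  simpa only [star_mul, hp.star_eq] using congrArg star hpν

theorem IsSelfAdjoint.commute_mul_star_of_mul_eq {R : Type*} [Semigroup R] [StarMul R] {p ν : R}
    (hp : IsSelfAdjoint p) (hpν : p * ν = ν) : Commute p (ν * star ν) := by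
  rw [Commute, SemiconjBy, ← mul_assoc, hpν, mul_assoc, hp.star_mul_eq_of_mul_eq hpν]

theorem isStarProjection_mul_mul_star {R : Type*} [Semigroup R] [StarMul R] {y r : R}
    (hr : IsSelfAdjoint r) (h : r * (star y * y) * r = r) : IsStarProjection (y * r * star y) where
  isIdempotentElem := by
    calc y * r * star y * (y * r * star y) = y * (r * (star y * y) * r) * star y := by
          simp only [mul_assoc]
      _ = y * r * star y := by rw [h]
  isSelfAdjoint := hr.conjugate y

section RangeProjection

variable {R : Type*} [Ring R] [StarRing R] {e : R}

def rangeProjDenom (e : R) : R := 1 + star (e - star e) * (e - star e)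

noncomputable def rangeProj (e : R) : R := e * star e * (rangeProjDenom e)⁻¹ʳ

theorem isSelfAdjoint_rangeProjDenom (e : R) : IsSelfAdjoint (rangeProjDenom e) :=
  .add (.one R) (.star_mul_self _)

theorem mul_rangeProjDenom_of_isIdempotentElem (he : IsIdempotentElem e) :
    e * rangeProjDenom e = e * star e * e := by
  have hs : star e * star e = star e := he.star.eq
  simp only [rangeProjDenom, star_sub, star_star, mul_add, mul_sub, sub_mul, mul_one, ← mul_assoc,
    he.eq, hs]
  abel

theorem rangeProjDenom_mul_of_isIdempotentElem (he : IsIdempotentElem e) :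
    rangeProjDenom e * e = e * star e * e := by
  have hs : star e * star e = star e := he.star.eq
  simp only [rangeProjDenom, star_sub, star_star, add_mul, mul_sub, sub_mul, one_mul, mul_assoc,
    he.eq, hs]
  abel

theorem commute_rangeProjDenom_of_isIdempotentElem (he : IsIdempotentElem e) :
    Commute e (rangeProjDenom e) :=
  (mul_rangeProjDenom_of_isIdempotentElem he).trans
    (rangeProjDenom_mul_of_isIdempotentElem he).symm

theorem mul_rangeProj_of_isIdempotentElem (he : IsIdempotentElem e) :
    e * rangeProj e = rangeProj e := by
  simp only [rangeProj, ← mul_assoc, he.eq]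

variable (he : IsIdempotentElem e) (hu : IsUnit (rangeProjDenom e))
include he hu

theorem rangeProj_mul_self_of_isIdempotentElem : rangeProj e * e = e := by
  have hg : Commute e (rangeProjDenom e)⁻¹ʳ :=
    (commute_rangeProjDenom_of_isIdempotentElem he).symm.ringInverse_left.symm
  rw [rangeProj, mul_assoc, ← hg.eq, ← mul_assoc, ← mul_rangeProjDenom_of_isIdempotentElem he,
    mul_assoc, Ring.mul_inverse_cancel _ hu, mul_one]

theorem isStarProjection_rangeProj_of_isIdempotentElem : IsStarProjection (rangeProj e) := by
  have he_h : Commute e (rangeProjDenom e) := commute_rangeProjDenom_of_isIdempotentElem he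
  have hes_h : Commute (star e) (rangeProjDenom e) := by
    simpa [(isSelfAdjoint_rangeProjDenom e).star_eq] using he_h.star_star
  have he_g := he_h.symm.ringInverse_left
  have hes_g := hes_h.symm.ringInverse_left
  refine ⟨?_, ?_⟩
  · calc rangeProj e * rangeProj e
        = e * star e * e * (star e * ((rangeProjDenom e)⁻¹ʳ * (rangeProjDenom e)⁻¹ʳ)) := by
          simp only [rangeProj, mul_assoc, he_g.left_comm, hes_g.left_comm]
      _ = e * rangeProjDenom e * (star e * ((rangeProjDenom e)⁻¹ʳ * (rangeProjDenom e)⁻¹ʳ)) := by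
          rw [mul_rangeProjDenom_of_isIdempotentElem he]
      _ = rangeProj e := by
          rw [mul_assoc, hes_h.symm.left_comm, ← mul_assoc (rangeProjDenom e),
            Ring.mul_inverse_cancel _ hu, one_mul, rangeProj, mul_assoc]
  · simp only [IsSelfAdjoint, rangeProj, star_mul, star_star,
      (isSelfAdjoint_rangeProjDenom e).ringInverse.star_eq, mul_assoc, he_g.eq, hes_g.eq]

end RangeProjection

section CornerProjection

variable {A : Type*} [CStarAlgebra A] [PartialOrder A] [StarOrderedRing A] {p ν : A}

theorem isUnit_one_add_of_nonneg {a : A} (ha : 0 ≤ a) : IsUnit (1 + a) :=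
  CStarAlgebra.isUnit_of_le 1 (le_add_of_nonneg_right ha)

theorem isUnit_rangeProjDenom (e : A) : IsUnit (rangeProjDenom e) :=
  isUnit_one_add_of_nonneg (star_mul_self_nonneg _)

theorem mul_star_le_one_of_norm_le_one {a : A} (ha : ‖a‖ ≤ 1) : a * star a ≤ 1 := by
  rw [← CStarAlgebra.norm_le_one_iff_of_nonneg _ (mul_star_self_nonneg a),
    CStarRing.norm_self_mul_star]
  exact mul_le_one₀ ha (norm_nonneg a) ha

omit [PartialOrder A] [StarOrderedRing A] in
theorem smul_mul_star_smul {ω : ℂ} (hω : star ω * ω = 1) (ν : A) :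
    ω • ν * star (ω • ν) = ν * star ν := by
  rw [star_smul, smul_mul_smul_comm, mul_comm, hω, one_smul]

noncomputable def defect (ν : A) : A := CFC.sqrt (1 - ν * star ν)

theorem defect_nonneg (ν : A) : 0 ≤ defect ν := CFC.sqrt_nonneg _

theorem defect_mul_self (hν : ν * star ν ≤ 1) : defect ν * defect ν = 1 - ν * star ν :=
  CFC.sqrt_mul_sqrt_self _ (sub_nonneg.mpr hν)

theorem defect_smul {ω : ℂ} (hω : star ω * ω = 1) (ν : A) : defect (ω • ν) = defect ν := by
  rw [defect, smul_mul_star_smul hω, defect]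

theorem isSelfAdjoint_one_add_defect (ν : A) : IsSelfAdjoint (1 + defect ν) :=
  .add (.one A) (.of_nonneg (defect_nonneg ν))

theorem isUnit_one_add_defect (ν : A) : IsUnit (1 + defect ν) :=
  isUnit_one_add_of_nonneg (defect_nonneg ν)

theorem IsSelfAdjoint.commute_one_add_defect (hp : IsSelfAdjoint p) (hpν : p * ν = ν) :
    Commute p (1 + defect ν) := by
  refine (Commute.one_right p).add_right ?_
  rw [defect, CFC.sqrt_eq_cfc]
  exact ((Commute.one_right p).sub_right (hp.commute_mul_star_of_mul_eq hpν)).symm.cfc_nnreal _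
    |>.symm

/-- `½ (p (1 + c) + ν + ν* + ν* (1 + c)⁻¹ ν)` with `c = defect ν`, factored as `y r y*` so that
idempotency reduces to `y* y = 2 (1 + c) p`. -/
noncomputable def cornerProj (p ν : A) : A :=
  ((1 + defect ν) * p + star ν) * ((2⁻¹ : ℂ) • (p * (1 + defect ν)⁻¹ʳ)) *
    star ((1 + defect ν) * p + star ν)

theorem isStarProjection_cornerProj (hp : IsStarProjection p) (hpν : p * ν = ν) (hνp : ν * p = 0)
    (hν : ν * star ν ≤ 1) : IsStarProjection (cornerProj p ν) := by
  rw [cornerProj]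
  set T := 1 + defect ν
  set R := T⁻¹ʳ
  have hT : IsSelfAdjoint T := isSelfAdjoint_one_add_defect ν
  have hpT : Commute p T := hp.isSelfAdjoint.commute_one_add_defect hpν
  have hpR : Commute p R := hpT.symm.ringInverse_left.symm
  have hRT (x : A) : R * (T * x) = x := by
    rw [← mul_assoc, Ring.inverse_mul_cancel _ (isUnit_one_add_defect ν), one_mul]
  have hpνs : p * star ν = 0 := by
    simpa only [star_mul, hp.isSelfAdjoint.star_eq, star_zero] using congrArg star hνp
  have hνsp : star ν * p = star ν := hp.isSelfAdjoint.star_mul_eq_of_mul_eq hpν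
  have hνTp : ν * (T * p) = 0 := by rw [← hpT.eq, ← mul_assoc, hνp, zero_mul]
  have hTT : T * T = (2 : ℂ) • T - ν * star ν := by
    calc T * T = 1 + 2 * defect ν + defect ν * defect ν := by simp only [T]; noncomm_ring
      _ = _ := by rw [defect_mul_self hν]; simp only [T, two_smul]; noncomm_ring
  have hyy : star (T * p + star ν) * (T * p + star ν) = (2 : ℂ) • (T * p) := by
    calc star (T * p + star ν) * (T * p + star ν) = T * T * p + ν * star ν := by
          simp only [star_add, star_mul, star_star, hp.isSelfAdjoint.star_eq, hT.star_eq, add_mul,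
            mul_add, mul_assoc, hpT.eq, hpT.left_comm, hp.isIdempotentElem.eq, hpνs, hνTp,
            mul_zero, zero_add, add_zero]
      _ = (2 : ℂ) • (T * p) := by
          rw [hTT, sub_mul, smul_mul_assoc, mul_assoc ν, hνsp, sub_add_cancel]
  apply isStarProjection_mul_mul_star
  · exact .smul (by simp [IsSelfAdjoint])
      ((IsSelfAdjoint.commute_iff hp.isSelfAdjoint hT.ringInverse).mp hpR)
  · rw [hyy, smul_mul_smul_comm, smul_mul_smul_comm, show (2⁻¹ * 2 * 2⁻¹ : ℂ) = 2⁻¹ by norm_num]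
    simp only [mul_assoc, hpR.eq, hpR.left_comm, hpT.left_comm, hRT, hp.isIdempotentElem.eq]

theorem cornerProj_smul (hp : IsStarProjection p) (hpν : p * ν = ν) {ω : ℂ}
    (hω : star ω * ω = 1) :
    cornerProj p (ω • ν) =
      cornerProj p ν + (2⁻¹ * (ω - 1)) • ν + (2⁻¹ * (star ω - 1)) • star ν := by
  rw [cornerProj, cornerProj, defect_smul hω]
  set T := 1 + defect ν
  set R := T⁻¹ʳ
  have hT : IsSelfAdjoint T := isSelfAdjoint_one_add_defect ν
  have hpT : Commute p T := hp.isSelfAdjoint.commute_one_add_defect hpν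
  have hpR : Commute p R := hpT.symm.ringInverse_left.symm
  have hTR (x : A) : T * (R * x) = x := by
    rw [← mul_assoc, Ring.mul_inverse_cancel _ (isUnit_one_add_defect ν), one_mul]
  have hRT (x : A) : R * (T * x) = x := by
    rw [← mul_assoc, Ring.inverse_mul_cancel _ (isUnit_one_add_defect ν), one_mul]
  have hνsp : star ν * p = star ν := hp.isSelfAdjoint.star_mul_eq_of_mul_eq hpν
  have hνsp' (x : A) : star ν * (p * x) = star ν * x := by rw [← mul_assoc, hνsp]
  have hpp (x : A) : p * (p * x) = p * x := by rw [← mul_assoc, hp.isIdempotentElem.eq]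
  simp only [star_add, star_mul, star_smul, star_star, hp.isSelfAdjoint.star_eq, hT.star_eq,
    add_mul, mul_add, smul_mul_assoc, mul_smul_comm, mul_assoc, hpp, hpR.left_comm, hpν, hTR,
    hνsp', hpT.eq, hRT, hνsp]
  linear_combination (norm := module) hω • ((2⁻¹ : ℂ) • (star ν * (R * ν)))

open Complex in
theorem eq_sum_cornerProj (hp : IsStarProjection p) (hpν : p * ν = ν) :
    ν = ((1 + I) / 2) • cornerProj p ν + ((I - 1) / 2) • cornerProj p (-ν) -
      I • cornerProj p (I • ν) := by
  have hneg := cornerProj_smul hp hpν (ω := -1) (by simp)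
  have hI := cornerProj_smul hp hpν (ω := I) (by simp [Complex.conj_I])
  rw [neg_one_smul] at hneg
  rw [hneg, hI, star_neg, star_one, Complex.star_def, Complex.conj_I]
  linear_combination (norm := module) (2⁻¹ : ℂ) • I_sq • (ν - star ν)

open Complex in
theorem exists_sum_three_isStarProjection (hp : IsStarProjection p) (hpν : p * ν = ν)
    (hνp : ν * p = 0) :
    ∃ (q : Fin 3 → A) (c : Fin 3 → ℂ), (∀ i, IsStarProjection (q i)) ∧ ν = ∑ i, c i • q i := by
  set s : ℂ := ((‖ν‖ + 1 : ℝ) : ℂ)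
  have hs : s ≠ 0 := ofReal_ne_zero.mpr (by positivity)
  set μ := s⁻¹ • ν
  have hpμ : p * μ = μ := by rw [mul_smul_comm, hpν]
  have hμ : μ * star μ ≤ 1 := by
    refine mul_star_le_one_of_norm_le_one ?_
    rw [norm_smul, norm_inv, norm_real, Real.norm_of_nonneg (by positivity),
      inv_mul_le_one₀ (by positivity)]
    linarith
  have hq {ω : ℂ} (hω : star ω * ω = 1) : IsStarProjection (cornerProj p (ω • μ)) :=
    isStarProjection_cornerProj hp (by rw [mul_smul_comm, hpμ])
      (by rw [smul_mul_assoc, smul_mul_assoc, hνp, smul_zero, smul_zero])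
      (by rwa [smul_mul_star_smul hω])
  refine ⟨![cornerProj p μ, cornerProj p (-μ), cornerProj p (I • μ)],
    ![s * ((1 + I) / 2), s * ((I - 1) / 2), -(s * I)], ?_, ?_⟩
  · intro i
    fin_cases i
    · simpa using hq (ω := 1) (by simp)
    · simpa using hq (ω := -1) (by simp)
    · exact hq (by simp [Complex.conj_I])
  · have hν : ν = s • μ := by rw [smul_smul, mul_inv_cancel₀ hs, one_smul]
    simp only [Fin.sum_univ_three, Matrix.cons_val_zero, Matrix.cons_val_one,
      Matrix.cons_val_two, Matrix.head_cons, Matrix.tail_cons]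
    conv_lhs => rw [hν, eq_sum_cornerProj hp hpμ]
    module

end CornerProjection

/-- every idempotent in a unital C*-algebra is a linear combination of
four projections. -/
theorem idempotent_linear_combination_of_four_projections (A : Type*) [CStarAlgebra A]
    (e : A) (he : e * e = e) :
    ∃ (p : Fin 4 → A) (l : Fin 4 → ℂ),
      (∀ i, star (p i) = p i ∧ p i * p i = p i) ∧ e = ∑ i, l i • p i := by
  let := CStarAlgebra.spectralOrder A
  have := CStarAlgebra.spectralOrderedRing A
  have hu := isUnit_rangeProjDenom e
  have hp := isStarProjection_rangeProj_of_isIdempotentElem he hu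
  obtain ⟨q, c, hq, hsum⟩ := exists_sum_three_isStarProjection hp (ν := e - rangeProj e)
    (by rw [mul_sub, rangeProj_mul_self_of_isIdempotentElem he hu, hp.isIdempotentElem.eq])
    (by rw [sub_mul, mul_rangeProj_of_isIdempotentElem he, hp.isIdempotentElem.eq, sub_self])
  have hall : ∀ i, IsStarProjection ((Fin.cons (rangeProj e) q : Fin 4 → A) i) := Fin.cases hp hq
  refine ⟨Fin.cons (rangeProj e) q, Fin.cons 1 c,
    fun i => ⟨(hall i).isSelfAdjoint.star_eq, (hall i).isIdempotentElem.eq⟩, ?_⟩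
  rw [Fin.sum_univ_succ, Fin.cons_zero, Fin.cons_zero, one_smul]
  simp only [Fin.cons_succ, ← hsum, add_sub_cancel]
end
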